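/- If the object set Obj is partitioned into shards, i.e., Obj = ⋃_{s ∈ S} Obj_s with the Obj_s pairwise disjoint, then the global serializability certification function matches the shard-local ones: for every payload l and payload set L, f(L, l) = COMMIT iff for every shard s, f_s(L | s, l | s) = COMMIT, where l | s restricts the read and write sets of l to objects in Obj_s (keeping the commit version) and L | s = {l' | s : l' ∈ L}. -/
import Mathlib


inductive Decision | commit | abort
deriving DecidableEq

def dmeet : Decision → Decision → Decision
  | .commit, .commit => .commit
  | _, _ => .abort

structure Payload (Obj Ver Val : Type) where
  R : Set (Obj × Ver)
  W : Set (Obj × Val)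
  Vc : Ver

/-- Global serializability commit condition. -/
def serOK {Obj Ver Val : Type} [LinearOrder Ver]
    (L : Set (Payload Obj Ver Val)) (l : Payload Obj Ver Val) : Prop :=
  ∀ x v, (x, v) ∈ l.R → ∀ p ∈ L, (∃ u, (x, u) ∈ p.W) → p.Vc ≤ v

/-- Shard-local serializability commit condition. -/
def serOKs {Obj Ver Val : Type} [LinearOrder Ver] (Objs : Set Obj)
    (L : Set (Payload Obj Ver Val)) (l : Payload Obj Ver Val) : Prop :=
  ∀ x ∈ Objs, ∀ v, (x, v) ∈ l.R → ∀ p ∈ L, (∃ u, (x, u) ∈ p.W) → p.Vc ≤ v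

open Classical in
noncomputable def serF {Obj Ver Val : Type} [LinearOrder Ver]
    (L : Set (Payload Obj Ver Val)) (l : Payload Obj Ver Val) : Decision :=
  if serOK L l then Decision.commit else Decision.abort

open Classical in
noncomputable def fS {Obj Ver Val : Type} [LinearOrder Ver] (Objs : Set Obj)
    (L : Set (Payload Obj Ver Val)) (l : Payload Obj Ver Val) : Decision :=
  if serOKs Objs L l then Decision.commit else Decision.abort

/-- Restriction of a payload to the objects of a shard. -/
def restrict {Obj Ver Val : Type} (Objs : Set Obj)
    (l : Payload Obj Ver Val) : Payload Obj Ver Val :=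
  ⟨{ p ∈ l.R | p.1 ∈ Objs }, { p ∈ l.W | p.1 ∈ Objs }, l.Vc⟩

theorem global_matches_local {Obj Ver Val S : Type} [LinearOrder Ver]
    (Objs : S → Set Obj)
    (hcover : (⋃ s, Objs s) = Set.univ)
    (hdisj : Pairwise fun s s' => Disjoint (Objs s) (Objs s'))
    (L : Set (Payload Obj Ver Val)) (l : Payload Obj Ver Val) :
    serF L l = Decision.commit ↔
      ∀ s : S, fS (Objs s) ((restrict (Objs s)) '' L) (restrict (Objs s) l)
        = Decision.commit := by
  have key : serOK L l ↔
      ∀ s : S, serOKs (Objs s) ((restrict (Objs s)) '' L) (restrict (Objs s) l) := by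
    constructor
    · intro h s x hx v hv p hp ⟨u, hu⟩
      obtain ⟨p', hp', rfl⟩ := hp
      exact h x v hv.1 p' hp' ⟨u, hu.1⟩
    · intro h x v hv p hp ⟨u, hu⟩
      have hxu : x ∈ ⋃ s, Objs s := by rw [hcover]; trivial
      obtain ⟨_, ⟨s, rfl⟩, hxs⟩ := hxu
      exact h s x hxs v ⟨hv, hxs⟩ (restrict (Objs s) p) ⟨p, hp, rfl⟩ ⟨u, hu, hxs⟩
  simp only [serF, fS]
  constructor
  · intro h s
    rw [if_pos]
    by_cases hc : serOK L l
    · exact (key.mp hc) s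
    · simp [hc] at h
  · intro h
    rw [if_pos]
    refine key.mpr fun s => ?_
    by_cases hc : serOKs (Objs s) ((restrict (Objs s)) '' L) (restrict (Objs s) l)
    · exact hc
    · have := h s; simp [hc] at this
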